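/- For 0 < ε < 1/2 and m ≥ 2, let u_ε(x) = −√ε (1 − x²)^{1/2+ε} on Ω = (−1,1) and ν = (1−x²)^{−2} dx. Then ∫_{{x ∈ Ω : dist(x, ∂Ω) ≤ 1/m}} u_ε(x)² dν ≥ m^{−2ε}/2; in particular, taking ε = 1/m, this quantity tends to a limit ≥ 1/2 as m → ∞ (so the uniform vanishing mass condition fails for ν). -/

import Mathlib

/-!
On the layer `1 - δ ≤ |x| < 1` the density of `u_ε² dν` is the even function `ε (1 - x²)^(2ε-1)`,
so the mass is `2ε ∫_{1-δ}^1 (1 - x²)^(2ε-1) dx`. There `1 - x ≤ 1 - x² ≤ 2 (1 - x)` and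
`2ε - 1 ≤ 0`, so `∫_{1-δ}^1 (1 - x)^(2ε-1) dx = δ^(2ε) / (2ε)` squeezes the mass between
`2^(2ε-1) δ^(2ε) ≥ δ^(2ε) / 2` and `δ^(2ε)`. For `ε = δ = 1/m` the lower bound `m^(-2/m) / 2`
tends to `1/2`, and the upper bound `1` keeps the `liminf` from being a junk value.
-/

open Set MeasureTheory Filter

section OneSubRpow

variable {r δ : ℝ}

lemma setIntegral_Ioo_one_sub_rpow (hr : -1 < r) (hδ : 0 ≤ δ) :
    ∫ x in Ioo (1 - δ) 1, (1 - x) ^ r = δ ^ (r + 1) / (r + 1) := by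
  rw [← integral_Ioc_eq_integral_Ioo, ← intervalIntegral.integral_of_le (by linarith),
    intervalIntegral.integral_comp_sub_left (fun x => x ^ r), integral_rpow (Or.inl hr),
    sub_self, sub_sub_cancel, Real.zero_rpow (by linarith), sub_zero]

lemma integrableOn_Ioo_one_sub_rpow (hr : -1 < r) (c : ℝ) :
    IntegrableOn (fun x => (1 - x) ^ r) (Ioo c 1) := by
  have := (intervalIntegral.intervalIntegrable_rpow' hr (a := 1 - c) (b := 0)).comp_sub_left 1
  simp only [sub_sub_cancel, sub_zero] at this
  exact this.1.mono_set Ioo_subset_Ioc_self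

lemma one_sub_sq_rpow_le (hr : r ≤ 0) {x : ℝ} (hx0 : 0 ≤ x) (hx1 : x < 1) :
    (1 - x ^ 2) ^ r ≤ (1 - x) ^ r :=
  Real.rpow_le_rpow_of_nonpos (by linarith) (by nlinarith) hr

lemma two_rpow_mul_le_one_sub_sq_rpow (hr : r ≤ 0) {x : ℝ} (hx0 : 0 ≤ x) (hx1 : x < 1) :
    2 ^ r * (1 - x) ^ r ≤ (1 - x ^ 2) ^ r := by
  rw [← Real.mul_rpow zero_le_two (by linarith)]
  exact Real.rpow_le_rpow_of_nonpos (by nlinarith) (by nlinarith) hr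

lemma integrableOn_Ioo_one_sub_sq_rpow (hr : -1 < r) (hr0 : r ≤ 0) {c : ℝ} (hc : 0 ≤ c) :
    IntegrableOn (fun x => (1 - x ^ 2) ^ r) (Ioo c 1) := by
  refine (integrableOn_Ioo_one_sub_rpow hr c).mono'
    (by fun_prop : Measurable fun x : ℝ => (1 - x ^ 2) ^ r).aestronglyMeasurable ?_
  refine (ae_restrict_iff' measurableSet_Ioo).2 (ae_of_all _ fun x ⟨hcx, hx1⟩ => ?_)
  rw [Real.norm_of_nonneg (Real.rpow_nonneg (by nlinarith) r)]
  exact one_sub_sq_rpow_le hr0 (by linarith) hx1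

lemma setIntegral_Ioo_one_sub_sq_rpow_le (hr : -1 < r) (hr0 : r ≤ 0) (hδ0 : 0 ≤ δ) (hδ1 : δ ≤ 1) :
    ∫ x in Ioo (1 - δ) 1, (1 - x ^ 2) ^ r ≤ δ ^ (r + 1) / (r + 1) := by
  rw [← setIntegral_Ioo_one_sub_rpow hr hδ0]
  refine setIntegral_mono_on (integrableOn_Ioo_one_sub_sq_rpow hr hr0 (by linarith))
    (integrableOn_Ioo_one_sub_rpow hr _) measurableSet_Ioo fun x ⟨hx0, hx1⟩ => ?_
  exact one_sub_sq_rpow_le hr0 (by linarith) hx1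

lemma le_setIntegral_Ioo_one_sub_sq_rpow (hr : -1 < r) (hr0 : r ≤ 0) (hδ0 : 0 ≤ δ) (hδ1 : δ ≤ 1) :
    2 ^ r * (δ ^ (r + 1) / (r + 1)) ≤ ∫ x in Ioo (1 - δ) 1, (1 - x ^ 2) ^ r := by
  rw [← setIntegral_Ioo_one_sub_rpow hr hδ0, ← integral_const_mul]
  refine setIntegral_mono_on ((integrableOn_Ioo_one_sub_rpow hr _).const_mul _)
    (integrableOn_Ioo_one_sub_sq_rpow hr hr0 (by linarith)) measurableSet_Ioo fun x ⟨hx0, hx1⟩ => ?_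
  exact two_rpow_mul_le_one_sub_sq_rpow hr0 (by linarith) hx1

end OneSubRpow

lemma setIntegral_abs_preimage_Ico (f : ℝ → ℝ) {a b : ℝ} (ha : 0 < a) :
    ∫ x in (|·|) ⁻¹' Ico a b, f |x| = 2 * ∫ x in Ioo a b, f x := by
  rw [← integral_Ico_eq_integral_Ioo,
    ← integral_indicator (measurableSet_Ico.preimage continuous_abs.measurable),
    show ((|·|) ⁻¹' Ico a b).indicator (fun x => f |x|) = fun x => (Ico a b).indicator f |x|
      from funext fun x => indicator_comp_right (g := f) _,
    integral_comp_abs, setIntegral_indicator measurableSet_Ico,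
    (inter_eq_right (s := Ioi 0)).2 fun x hx => ha.trans_le hx.1]

lemma sq_sqrt_mul_rpow_mul_inv {ε t : ℝ} (hε : 0 ≤ ε) (ht : 0 < t) :
    (Real.sqrt ε * t ^ ((1:ℝ)/2 + ε)) ^ 2 * (t ^ 2)⁻¹ = ε * t ^ (2 * ε - 1) := by
  rw [mul_pow, Real.sq_sqrt hε, ← Real.rpow_natCast, ← Real.rpow_mul ht.le, ← Real.rpow_natCast,
    ← Real.rpow_neg ht.le, mul_assoc, ← Real.rpow_add ht]
  congr 2
  ring

/-- `∫_{dist(x, ∂Ω) ≤ δ} u_ε² dν` for `Ω = (-1, 1)` and `dν = (1 - x²)⁻² dx`. -/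
noncomputable def boundaryMass (ε δ : ℝ) : ℝ :=
  ∫ x in {x : ℝ | x ∈ Ioo (-1:ℝ) 1 ∧ 1 - |x| ≤ δ},
    (-(Real.sqrt ε * (1 - x ^ 2) ^ ((1:ℝ)/2 + ε))) ^ 2 * ((1 - x ^ 2) ^ 2)⁻¹

section BoundaryMass

variable {ε δ : ℝ}

lemma boundaryLayer_eq (δ : ℝ) :
    {x : ℝ | x ∈ Ioo (-1:ℝ) 1 ∧ 1 - |x| ≤ δ} = (|·|) ⁻¹' Ico (1 - δ) 1 := by
  ext x
  simp only [mem_ofPred_eq, mem_Ioo, mem_preimage, mem_Ico, ← abs_lt]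
  constructor <;> rintro ⟨h1, h2⟩ <;> exact ⟨by linarith, by linarith⟩

lemma boundaryMass_eq (hε : 0 ≤ ε) (hδ : δ < 1) :
    boundaryMass ε δ = 2 * ε * ∫ x in Ioo (1 - δ) 1, (1 - x ^ 2) ^ (2 * ε - 1) := by
  set g : ℝ → ℝ := fun t => (-(Real.sqrt ε * (1 - t ^ 2) ^ ((1:ℝ)/2 + ε))) ^ 2 * ((1 - t ^ 2) ^ 2)⁻¹
  calc boundaryMass ε δ = ∫ x in (|·|) ⁻¹' Ico (1 - δ) 1, g |x| := by
        simp only [boundaryMass, g, sq_abs, boundaryLayer_eq]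
    _ = 2 * ∫ x in Ioo (1 - δ) 1, g x := setIntegral_abs_preimage_Ico g (by linarith)
    _ = 2 * ∫ x in Ioo (1 - δ) 1, ε * (1 - x ^ 2) ^ (2 * ε - 1) := by
        congr 1
        refine setIntegral_congr_fun measurableSet_Ioo fun x ⟨hx0, hx1⟩ => ?_
        simp only [g, neg_sq]
        exact sq_sqrt_mul_rpow_mul_inv hε (by nlinarith)
    _ = _ := by rw [integral_const_mul, mul_assoc]

lemma le_boundaryMass (hε0 : 0 < ε) (hε : ε ≤ 1 / 2) (hδ0 : 0 ≤ δ) (hδ1 : δ < 1) :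
    δ ^ (2 * ε) / 2 ≤ boundaryMass ε δ := by
  have hbound := le_setIntegral_Ioo_one_sub_sq_rpow (r := 2 * ε - 1) (by linarith) (by linarith)
    hδ0 hδ1.le
  have htwo : (1:ℝ) / 2 ≤ 2 ^ (2 * ε - 1) := by
    rw [one_div, ← Real.rpow_neg_one]
    exact Real.rpow_le_rpow_of_exponent_le one_le_two (by linarith)
  rw [sub_add_cancel] at hbound
  rw [boundaryMass_eq hε0.le hδ1]
  calc δ ^ (2 * ε) / 2 ≤ 2 ^ (2 * ε - 1) * δ ^ (2 * ε) := by
        nlinarith [Real.rpow_nonneg hδ0 (2 * ε)]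
    _ = 2 * ε * (2 ^ (2 * ε - 1) * (δ ^ (2 * ε) / (2 * ε))) := by field_simp
    _ ≤ _ := by gcongr

lemma boundaryMass_le (hε0 : 0 < ε) (hε : ε ≤ 1 / 2) (hδ0 : 0 ≤ δ) (hδ1 : δ < 1) :
    boundaryMass ε δ ≤ δ ^ (2 * ε) := by
  have hbound := setIntegral_Ioo_one_sub_sq_rpow_le (r := 2 * ε - 1) (by linarith) (by linarith)
    hδ0 hδ1.le
  rw [sub_add_cancel] at hbound
  rw [boundaryMass_eq hε0.le hδ1]
  calc _ ≤ 2 * ε * (δ ^ (2 * ε) / (2 * ε)) := by gcongr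
    _ = _ := by field_simp

lemma natCast_rpow_le_boundaryMass (hε0 : 0 < ε) (hε : ε ≤ 1 / 2) {m : ℕ} (hm : 2 ≤ m) :
    (m : ℝ) ^ (-(2:ℝ) * ε) / 2 ≤ boundaryMass ε (1 / m) := by
  have hm' : (2:ℝ) ≤ m := by exact_mod_cast hm
  convert le_boundaryMass hε0 hε (δ := 1 / m) (by positivity)
    (by rw [div_lt_one] <;> linarith) using 2
  rw [one_div, Real.inv_rpow (by positivity), ← Real.rpow_neg (by positivity), neg_mul]

lemma one_half_le_liminf_boundaryMass :
    (1:ℝ) / 2 ≤ liminf (fun m : ℕ => boundaryMass (1 / m) (1 / m)) atTop := by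
  have hε : ∀ m : ℕ, 2 ≤ m → 0 < (1:ℝ) / m ∧ (1:ℝ) / m ≤ 1 / 2 := fun m hm =>
    have hm' : (2:ℝ) ≤ m := by exact_mod_cast hm
    ⟨by positivity, one_div_le_one_div_of_le two_pos hm'⟩
  have hlim : Tendsto (fun m : ℕ => (m : ℝ) ^ (-(2:ℝ) * (1 / m)) / 2) atTop (nhds (1 / 2)) := by
    have := ((tendsto_rpow_div_mul_add (-2) 1 0 one_ne_zero.symm).comp
      tendsto_natCast_atTop_atTop).div_const 2
    convert this using 2 with m
    simp only [Function.comp_apply]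
    ring_nf
  have hlower : ∀ᶠ m : ℕ in atTop,
      (m : ℝ) ^ (-(2:ℝ) * (1 / m)) / 2 ≤ boundaryMass (1 / m) (1 / m) := by
    filter_upwards [eventually_ge_atTop 2] with m hm
    exact natCast_rpow_le_boundaryMass (hε m hm).1 (hε m hm).2 hm
  have hupper : ∀ᶠ m : ℕ in atTop, boundaryMass (1 / m) (1 / m) ≤ 1 := by
    filter_upwards [eventually_ge_atTop 2] with m hm
    obtain ⟨h0, h1⟩ := hε m hm
    exact (boundaryMass_le h0 h1 h0.le (by linarith)).trans
      (Real.rpow_le_one h0.le (by linarith) (by linarith))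
  calc (1:ℝ) / 2 = liminf _ atTop := hlim.liminf_eq.symm
    _ ≤ _ := liminf_le_liminf hlower hlim.isBoundedUnder_ge
      (isCoboundedUnder_ge_of_eventually_le atTop hupper)

end BoundaryMass

theorem stmt_10 (u : ℝ → ℝ → ℝ)
    (hu : u = fun (ε : ℝ) (x : ℝ) => -(Real.sqrt ε * (1 - x ^ 2) ^ ((1:ℝ)/2 + ε))) :
    (∀ ε ∈ Ioo (0:ℝ) (1/2), ∀ m : ℕ, 2 ≤ m →
      ((m : ℝ) ^ (-(2:ℝ) * ε)) / 2 ≤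
        ∫ x in {x : ℝ | x ∈ Ioo (-1:ℝ) 1 ∧ 1 - |x| ≤ 1 / (m : ℝ)},
          (u ε x) ^ 2 * ((1 - x ^ 2) ^ 2)⁻¹) ∧
    (1:ℝ)/2 ≤ liminf (fun m : ℕ =>
        ∫ x in {x : ℝ | x ∈ Ioo (-1:ℝ) 1 ∧ 1 - |x| ≤ 1 / (m : ℝ)},
          (u (1 / (m : ℝ)) x) ^ 2 * ((1 - x ^ 2) ^ 2)⁻¹) atTop := by
  subst hu
  exact ⟨fun ε ⟨hε0, hε⟩ m hm => natCast_rpow_le_boundaryMass hε0 hε.le hm,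
    one_half_le_liminf_boundaryMass⟩
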